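/- Srivastava's double series identity: if (Δ_m) is a bounded sequence of complex numbers, ρ ∈ ℂ is not a nonpositive integer (and ρ/2, (ρ+1)/2 are not nonpositive integers), and x ∈ ℂ, then ∑_{m=0}^{∞} ∑_{n=0}^{∞} (−1)^n Δ_{m+n} x^{m+n} / ((ρ)_m (ρ)_n m! n!) = ∑_{m=0}^{∞} Δ_{2m} (−x²)^m / ( (ρ)_m (ρ/2)_m ((ρ+1)/2)_m 4^m m! ). -/

import Mathlib

/-!
Grouping the absolutely convergent double series by `N = m + n` gives `∑ Δ_N x^N c_N`, where
`c_N` is the coefficient of `x^N` in `₀F₁(;ρ;x) ₀F₁(;ρ;-x)`. The swap `(m, n) ↦ (n, m)` shows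
`c_N = 0` for odd `N`. For even indices, Zeilberger's algorithm produces the recurrence
`(N+2)(2ρ+N)(ρ+N)(ρ+N+1) c_{N+2} + 4 c_N = 0`, certified by a WZ pair, whence
`c_{2k} = (-1)^k / (k! (ρ)_k (ρ)_{2k})`; the duplication formula
`(ρ)_{2k} = 4^k (ρ/2)_k ((ρ+1)/2)_k` turns this into the right-hand side.
-/

noncomputable def poch (a : ℂ) (n : ℕ) : ℂ := (ascPochhammer ℂ n).eval a

open Finset Nat Filter

lemma poch_zero (ρ : ℂ) : poch ρ 0 = 1 := by simp [poch]

lemma poch_succ (ρ : ℂ) (n : ℕ) : poch ρ (n + 1) = poch ρ n * (ρ + n) :=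
  ascPochhammer_succ_eval n ρ

lemma poch_two_mul (ρ : ℂ) (k : ℕ) :
    poch ρ (2 * k) = 4 ^ k * poch (ρ / 2) k * poch ((ρ + 1) / 2) k := by
  induction k with
  | zero => simp [poch_zero]
  | succ k ih =>
    rw [show 2 * (k + 1) = 2 * k + 1 + 1 by ring, poch_succ, poch_succ, ih, poch_succ, poch_succ]
    push_cast
    ring

/-- The coefficient of `x^m` in `₀F₁(;ρ;x)`. -/
noncomputable def coeff0F1 (ρ : ℂ) (m : ℕ) : ℂ := (poch ρ m * m !)⁻¹

lemma coeff0F1_succ (ρ : ℂ) (m : ℕ) :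
    coeff0F1 ρ (m + 1) = coeff0F1 ρ m * ((ρ + m) * (m + 1))⁻¹ := by
  simp only [coeff0F1, poch_succ, factorial_succ, cast_mul, cast_succ, mul_inv]
  ring

lemma coeff0F1_eq_mul_succ {ρ : ℂ} {m : ℕ} (hρ : ρ + m ≠ 0) :
    coeff0F1 ρ m = (ρ + m) * (m + 1) * coeff0F1 ρ (m + 1) := by
  rw [coeff0F1_succ, mul_comm, mul_assoc,
    inv_mul_cancel₀ (mul_ne_zero hρ m.cast_add_one_ne_zero), mul_one]

/-- The coefficient of `x^N` in `₀F₁(;ρ;x) ₀F₁(;ρ;-x)`. -/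
noncomputable def cauchyCoeff (ρ : ℂ) (N : ℕ) : ℂ :=
  ∑ p ∈ antidiagonal N, (-1) ^ p.2 * coeff0F1 ρ p.1 * coeff0F1 ρ p.2

/-- The summands of `cauchyCoeff ρ N`, extended by zero past `n = N` so that the shift identities
hold for every `n` without boundary cases. -/
noncomputable def cauchyTerm (ρ : ℂ) (N n : ℕ) : ℂ :=
  if n ≤ N then (-1) ^ n * coeff0F1 ρ n * coeff0F1 ρ (N - n) else 0

lemma sum_range_cauchyTerm (ρ : ℂ) {N M : ℕ} (h : N < M) :
    ∑ n ∈ range M, cauchyTerm ρ N n = cauchyCoeff ρ N := by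
  have hM : ∑ n ∈ range (N + 1), cauchyTerm ρ N n = ∑ n ∈ range M, cauchyTerm ρ N n :=
    sum_subset (range_subset_range.2 h) fun n _ hn =>
      if_neg (by simpa [Nat.lt_succ_iff] using hn)
  rw [← hM, cauchyCoeff, ← Nat.sum_antidiagonal_swap]
  simp only [Prod.fst_swap, Prod.snd_swap]
  rw [Nat.sum_antidiagonal_eq_sum_range_succ (fun i j => (-1) ^ i * coeff0F1 ρ j * coeff0F1 ρ i)]
  refine sum_congr rfl fun n hn => ?_
  rw [cauchyTerm, if_pos (Nat.lt_succ_iff.1 (mem_range.1 hn))]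
  ring

lemma cauchyTerm_eq_mul_cauchyTerm_add_two {ρ : ℂ} (hρ : ∀ k : ℕ, ρ + k ≠ 0) (N n : ℕ) :
    cauchyTerm ρ N n =
      (ρ + N - n) * (ρ + N - n + 1) * (N - n + 1) * (N - n + 2) * cauchyTerm ρ (N + 2) n := by
  rcases le_or_gt n N with hn | hn
  · obtain ⟨k, rfl⟩ := exists_add_of_le hn
    rw [cauchyTerm, cauchyTerm, if_pos hn, if_pos (by omega),
      show n + k + 2 - n = k + 1 + 1 by omega, add_tsub_cancel_left,
      coeff0F1_eq_mul_succ (hρ k), coeff0F1_eq_mul_succ (hρ (k + 1))]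
    push_cast
    ring
  · rw [cauchyTerm, if_neg (by omega)]
    rcases (show n = N + 1 ∨ n = N + 2 ∨ N + 2 < n by omega) with rfl | rfl | hn'
    · push_cast; ring
    · push_cast; ring
    · rw [cauchyTerm, if_neg (by omega), mul_zero]

lemma mul_cauchyTerm_succ {ρ : ℂ} (hρ : ∀ k : ℕ, ρ + k ≠ 0) (M n : ℕ) :
    (ρ + n) * (n + 1) * cauchyTerm ρ M (n + 1) =
      -((ρ + M - 1 - n) * (M - n)) * cauchyTerm ρ M n := by
  rcases le_or_gt (n + 1) M with hn | hn
  · obtain ⟨k, rfl⟩ := exists_add_of_le hn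
    rw [cauchyTerm, cauchyTerm, if_pos hn, if_pos (by omega),
      show n + 1 + k - n = k + 1 by omega, add_tsub_cancel_left,
      coeff0F1_eq_mul_succ (hρ n), coeff0F1_eq_mul_succ (hρ k)]
    push_cast
    ring
  · rw [cauchyTerm, if_neg (by omega)]
    rcases (show n = M ∨ M < n by omega) with rfl | hn'
    · ring
    · rw [cauchyTerm, if_neg (by omega)]
      ring

/-- Zeilberger's certificate: `n ↦ wzCert ρ N n * cauchyTerm ρ (N + 2) n` is the antidifference
that telescopes the recurrence for `cauchyCoeff`. -/
def wzCert (ρ : ℂ) (N n : ℕ) : ℂ :=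
  n * (4 + 4 * ρ - 6 * ρ ^ 2 - 2 * ρ ^ 3 + N * (10 - 3 * ρ - 7 * ρ ^ 2) + N ^ 2 * (5 - 5 * ρ))
    + n ^ 2 * (-10 - 6 * ρ + 2 * ρ ^ 2 + N * (-16 - ρ) - 5 * N ^ 2)
    + n ^ 3 * (8 + 2 * ρ + 6 * N) - 2 * n ^ 4

lemma wzCert_spec (ρ : ℂ) (N n : ℕ) :
    (ρ + n) * (n + 1) * ((N + 2) * (2 * ρ + N) * (ρ + N) * (ρ + N + 1)
        + 4 * ((ρ + N - n) * (ρ + N - n + 1) * (N - n + 1) * (N - n + 2))) =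
      -wzCert ρ N (n + 1) * ((ρ + N + 1 - n) * (N + 2 - n))
        - wzCert ρ N n * ((ρ + n) * (n + 1)) := by
  simp only [wzCert]
  push_cast
  ring

lemma cauchyTerm_telescope {ρ : ℂ} (hρ : ∀ k : ℕ, ρ + k ≠ 0) (N n : ℕ) :
    (N + 2) * (2 * ρ + N) * (ρ + N) * (ρ + N + 1) * cauchyTerm ρ (N + 2) n
        + 4 * cauchyTerm ρ N n =
      wzCert ρ N (n + 1) * cauchyTerm ρ (N + 2) (n + 1)
        - wzCert ρ N n * cauchyTerm ρ (N + 2) n := by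
  have hshift := mul_cauchyTerm_succ hρ (N + 2) n
  push_cast at hshift
  apply mul_left_cancel₀ (mul_ne_zero (hρ n) n.cast_add_one_ne_zero)
  rw [cauchyTerm_eq_mul_cauchyTerm_add_two hρ N n]
  linear_combination (-wzCert ρ N (n + 1)) * hshift + cauchyTerm ρ (N + 2) n * wzCert_spec ρ N n

lemma cauchyCoeff_recurrence {ρ : ℂ} (hρ : ∀ k : ℕ, ρ + k ≠ 0) (N : ℕ) :
    (N + 2) * (2 * ρ + N) * (ρ + N) * (ρ + N + 1) * cauchyCoeff ρ (N + 2) + 4 * cauchyCoeff ρ N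
      = 0 := by
  rw [← sum_range_cauchyTerm ρ (show N + 2 < N + 3 by omega),
    ← sum_range_cauchyTerm ρ (show N < N + 3 by omega), mul_sum, mul_sum, ← sum_add_distrib,
    sum_congr rfl fun n _ => cauchyTerm_telescope hρ N n,
    sum_range_sub fun n => wzCert ρ N n * cauchyTerm ρ (N + 2) n]
  simp [wzCert, cauchyTerm]

lemma cauchyCoeff_eq_zero_of_odd (ρ : ℂ) {N : ℕ} (hN : Odd N) : cauchyCoeff ρ N = 0 := by
  have hneg : cauchyCoeff ρ N = -cauchyCoeff ρ N := by
    conv_lhs => rw [cauchyCoeff, ← Nat.sum_antidiagonal_swap]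
    rw [cauchyCoeff, ← sum_neg_distrib]
    refine sum_congr rfl fun p hp => ?_
    have hsign : (-1 : ℂ) ^ p.1 * (-1) ^ p.2 = -1 := by
      rw [← pow_add, mem_antidiagonal.1 hp, hN.neg_one_pow]
    have hsq : ((-1 : ℂ) ^ p.2) ^ 2 = 1 := by rw [← pow_mul, pow_mul', neg_one_sq, one_pow]
    simp only [Prod.fst_swap, Prod.snd_swap]
    linear_combination coeff0F1 ρ p.1 * coeff0F1 ρ p.2 * ((-1) ^ p.2 * hsign - (-1) ^ p.1 * hsq)
  linear_combination hneg / 2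

lemma cauchyCoeff_two_mul {ρ : ℂ} (hρ : ∀ k : ℕ, ρ + k ≠ 0) (k : ℕ) :
    cauchyCoeff ρ (2 * k) = (-1) ^ k * coeff0F1 ρ k * (poch ρ (2 * k))⁻¹ := by
  induction k with
  | zero => simp [cauchyCoeff, coeff0F1, poch_zero]
  | succ k ih =>
    have hrec := cauchyCoeff_recurrence hρ (2 * k)
    have hD : (ρ + k) * (k + 1) * ((ρ + 2 * k) * (ρ + 2 * k + 1)) ≠ 0 := by
      have h2 := hρ (2 * k)
      have h3 := hρ (2 * k + 1)
      push_cast at h2 h3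
      exact mul_ne_zero (mul_ne_zero (hρ k) k.cast_add_one_ne_zero)
        (mul_ne_zero h2 (by rwa [← add_assoc] at h3))
    have hstep : cauchyCoeff ρ (2 * k + 2) =
        -cauchyCoeff ρ (2 * k) * ((ρ + k) * (k + 1) * ((ρ + 2 * k) * (ρ + 2 * k + 1)))⁻¹ := by
      rw [eq_mul_inv_iff_mul_eq₀ hD]
      push_cast at hrec
      linear_combination hrec / 4
    rw [show 2 * (k + 1) = 2 * k + 1 + 1 by ring, hstep, ih, poch_succ, poch_succ, coeff0F1_succ]
    push_cast
    simp only [mul_inv]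
    ring

lemma eventually_le_norm_add_natCast (ρ : ℂ) (C : ℝ) : ∀ᶠ m : ℕ in atTop, C ≤ ‖ρ + m‖ := by
  filter_upwards [eventually_ge_atTop ⌈C + ‖ρ‖⌉₊] with m hm
  have hm' : C + ‖ρ‖ ≤ m := Nat.ceil_le.1 hm
  have htri : ‖(m : ℂ)‖ ≤ ‖ρ + m‖ + ‖ρ‖ := by
    simpa using norm_sub_le (ρ + m) ρ
  rw [Complex.norm_natCast] at htri
  linarith

lemma summable_norm_pow_mul_coeff0F1 (ρ x : ℂ) :
    Summable fun m => ‖x ^ m * coeff0F1 ρ m‖ := by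
  refine summable_of_ratio_norm_eventually_le (r := 1 / 2) (by norm_num) ?_
  filter_upwards [eventually_le_norm_add_natCast ρ (2 * ‖x‖ + 1)] with m hm
  have hratio : ‖x‖ / (‖ρ + m‖ * (m + 1)) ≤ 1 / 2 := by
    rw [div_le_iff₀ (mul_pos (by linarith [norm_nonneg x]) m.cast_add_one_pos)]
    have : (1 : ℝ) ≤ m + 1 := by linarith [m.cast_nonneg (α := ℝ)]
    nlinarith [norm_nonneg x]
  calc ‖‖x ^ (m + 1) * coeff0F1 ρ (m + 1)‖‖
      = ‖x ^ m * coeff0F1 ρ m‖ * (‖x‖ / (‖ρ + m‖ * (m + 1))) := by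
        rw [norm_norm, coeff0F1_succ, pow_succ]
        simp only [norm_mul, norm_inv, norm_pow]
        rw [show ‖(m : ℂ) + 1‖ = m + 1 by exact_mod_cast Complex.norm_natCast (m + 1)]
        ring
    _ ≤ ‖x ^ m * coeff0F1 ρ m‖ * (1 / 2) := by gcongr
    _ = 1 / 2 * ‖‖x ^ m * coeff0F1 ρ m‖‖ := by rw [norm_norm, mul_comm]

lemma summable_mul_of_norm_bounded {ι R : Type*} [NormedRing R] [CompleteSpace R]
    {D F : ι → R} {C : ℝ} (hD : ∀ i, ‖D i‖ ≤ C) (hF : Summable fun i => ‖F i‖) :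
    Summable fun i => D i * F i :=
  (hF.mul_left C).of_norm_bounded fun i =>
    (norm_mul_le _ _).trans (mul_le_mul_of_nonneg_right (hD i) (norm_nonneg _))

lemma Summable.tsum_tsum_eq_tsum_sum_antidiagonal {α : Type*} [AddCommGroup α] [UniformSpace α]
    [IsUniformAddGroup α] [CompleteSpace α] [T0Space α] {f : ℕ × ℕ → α} (hf : Summable f) :
    ∑' m, ∑' n, f (m, n) = ∑' N, ∑ p ∈ antidiagonal N, f p := by
  rw [← hf.tsum_prod, ← HasAntidiagonal.sigmaAntidiagonalEquivProd.tsum_eq f]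
  conv_rhs => congr; ext; rw [← sum_finset_coe, ← tsum_fintype (L := .unconditional _)]
  exact Summable.tsum_sigma' (fun _ => (hasSum_fintype _).summable)
    (HasAntidiagonal.sigmaAntidiagonalEquivProd.summable_iff.mpr hf)

theorem stmt5_general (Δ : ℕ → ℂ) (hΔ : ∃ C : ℝ, ∀ m : ℕ, ‖Δ m‖ ≤ C)
    (ρ : ℂ) (hρ : ∀ k : ℕ, ρ ≠ -(k : ℂ))
    (x : ℂ) :
    ∑' (m : ℕ), ∑' (n : ℕ),
        (-1 : ℂ) ^ n * Δ (m + n) * x ^ (m + n) /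
          (poch ρ m * poch ρ n * m.factorial * n.factorial)
      = ∑' (m : ℕ), Δ (2 * m) * (-x ^ 2) ^ m /
          (poch ρ m * poch (ρ / 2) m * poch ((ρ + 1) / 2) m * (4 : ℂ) ^ m * m.factorial) := by
  obtain ⟨C, hC⟩ := hΔ
  have hρ' : ∀ k : ℕ, ρ + k ≠ 0 := fun k h => hρ k (eq_neg_of_add_eq_zero_left h)
  have hsupp : Function.support (fun N => Δ N * x ^ N * cauchyCoeff ρ N) ⊆ Set.range (2 * ·) := by
    intro N hN
    obtain ⟨k, rfl⟩ | hodd := N.even_or_odd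
    · exact ⟨k, two_mul k⟩
    · simp [cauchyCoeff_eq_zero_of_odd ρ hodd] at hN
  let F : ℕ × ℕ → ℂ := fun p =>
    Δ (p.1 + p.2) * (x ^ p.1 * coeff0F1 ρ p.1 * ((-x) ^ p.2 * coeff0F1 ρ p.2))
  have hprod :=
    (summable_norm_pow_mul_coeff0F1 ρ x).mul_norm (summable_norm_pow_mul_coeff0F1 ρ (-x))
  have hF : Summable F := summable_mul_of_norm_bounded (fun p => hC (p.1 + p.2)) hprod
  calc _ = ∑' m, ∑' n, F (m, n) :=
        tsum_congr fun m => tsum_congr fun n => by simp only [F, coeff0F1]; ring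
    _ = ∑' N, ∑ p ∈ antidiagonal N, F p := hF.tsum_tsum_eq_tsum_sum_antidiagonal
    _ = ∑' N, Δ N * x ^ N * cauchyCoeff ρ N := tsum_congr fun N => by
        rw [cauchyCoeff, mul_sum]
        refine sum_congr rfl fun p hp => ?_
        obtain rfl := mem_antidiagonal.1 hp
        simp only [F]
        ring
    _ = ∑' k, Δ (2 * k) * x ^ (2 * k) * cauchyCoeff ρ (2 * k) :=
        ((mul_right_injective₀ two_ne_zero).tsum_eq hsupp).symm
    _ = _ := tsum_congr fun k => by
        rw [cauchyCoeff_two_mul hρ', poch_two_mul, coeff0F1]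
        ring

theorem stmt5 (Δ : ℕ → ℂ) (hΔ : ∃ C : ℝ, ∀ m : ℕ, ‖Δ m‖ ≤ C)
    (ρ : ℂ) (hρ : ∀ k : ℕ, ρ ≠ -(k : ℂ))
    (hρ2 : ∀ k : ℕ, ρ / 2 ≠ -(k : ℂ)) (hρ3 : ∀ k : ℕ, (ρ + 1) / 2 ≠ -(k : ℂ))
    (x : ℂ) :
    ∑' (m : ℕ), ∑' (n : ℕ),
        (-1 : ℂ) ^ n * Δ (m + n) * x ^ (m + n) /
          (poch ρ m * poch ρ n * m.factorial * n.factorial)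
      = ∑' (m : ℕ), Δ (2 * m) * (-x ^ 2) ^ m /
          (poch ρ m * poch (ρ / 2) m * poch ((ρ + 1) / 2) m * (4 : ℂ) ^ m * m.factorial) :=
  stmt5_general Δ hΔ ρ hρ x
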